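/- arXiv:1604.07063 — 8 statements merged into one kernel-verified Lean document; each statement's English description precedes it below -/
import Mathlib

section
/- Let D be a finite set and Γ a finite constraint language on D (a finite set of finitary relations on D). Suppose that for every 2-element subset B ⊆ D there exists a conservative polymorphism of Γ whose restriction to B is a semilattice, a majority, or a minority operation. Then there exist conservative polymorphisms f* (binary), g* (ternary) and h* (ternary) of Γ such that for every 2-element subset B ⊆ D: (i) f* restricted to B is a semilattice operation if B is red, and f*(x,y)=x for all x,y ∈ B otherwise; (ii) g* restricted to B is a majority operation if B is yellow, g*(x,y,z)=x for x,y,z ∈ B if B is blue, and g*(x,y,z)=f*(f*(x,y),z) for x,y,z ∈ B if B is red; (iii) h* restricted to B is a minority operation if B is blue, h*(x,y,z)=x for x,y,z ∈ B if B is yellow, and h*(x,y,z)=f*(f*(x,y),z) for x,y,z ∈ B if B is red. (The Three Operations Theorem.) -/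
/-- A constraint language on `D`: a set of relations, each given with its arity. -/
abbrev Lang (D : Type*) := Set (Σ r : ℕ, Set (Fin r → D))

/-- A binary operation is a polymorphism of `Γ` if it preserves every relation of `Γ`. -/
def IsPoly2 {D : Type*} (Γ : Lang D) (f : D → D → D) : Prop :=
  ∀ R ∈ Γ, ∀ t₁ t₂ : Fin R.1 → D, t₁ ∈ R.2 → t₂ ∈ R.2 →
    (fun k => f (t₁ k) (t₂ k)) ∈ R.2

/-- A ternary operation is a polymorphism of `Γ` if it preserves every relation of `Γ`. -/
def IsPoly3 {D : Type*} (Γ : Lang D) (f : D → D → D → D) : Prop :=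
  ∀ R ∈ Γ, ∀ t₁ t₂ t₃ : Fin R.1 → D, t₁ ∈ R.2 → t₂ ∈ R.2 → t₃ ∈ R.2 →
    (fun k => f (t₁ k) (t₂ k) (t₃ k)) ∈ R.2

/-- Conservativity for a binary operation. -/
def Cons2 {D : Type*} (f : D → D → D) : Prop := ∀ x y, f x y = x ∨ f x y = y

/-- Conservativity for a ternary operation. -/
def Cons3 {D : Type*} (f : D → D → D → D) : Prop := ∀ x y z, f x y z ∈ ({x, y, z} : Set D)

/-- `f` restricted to `B` is a semilattice operation: idempotent, commutative
and associative on `B`. -/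
def SemilatticeOn {D : Type*} (f : D → D → D) (B : Set D) : Prop :=
  (∀ x ∈ B, f x x = x) ∧ (∀ x ∈ B, ∀ y ∈ B, f x y = f y x) ∧
  (∀ x ∈ B, ∀ y ∈ B, ∀ z ∈ B, f (f x y) z = f x (f y z))

/-- `f` restricted to `B` is a majority operation. -/
def MajorityOn {D : Type*} (f : D → D → D → D) (B : Set D) : Prop :=
  ∀ x ∈ B, ∀ y ∈ B, f x x y = x ∧ f x y x = x ∧ f y x x = x

/-- `f` restricted to `B` is a minority operation. -/
def MinorityOn {D : Type*} (f : D → D → D → D) (B : Set D) : Prop :=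
  ∀ x ∈ B, ∀ y ∈ B, f x x y = y ∧ f x y x = y ∧ f y x x = y

/-- `B` is red: `Γ` has a conservative polymorphism whose restriction to `B` is a
semilattice operation. -/
def Red {D : Type*} (Γ : Lang D) (B : Set D) : Prop :=
  ∃ f, IsPoly2 Γ f ∧ Cons2 f ∧ SemilatticeOn f B

/-- `B` is yellow: `B` is not red and `Γ` has a conservative polymorphism whose restriction
to `B` is a majority operation. -/
def Yellow {D : Type*} (Γ : Lang D) (B : Set D) : Prop :=
  ¬ Red Γ B ∧ ∃ g, IsPoly3 Γ g ∧ Cons3 g ∧ MajorityOn g B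

/-- `B` is blue: `B` is neither red nor yellow and `Γ` has a conservative polymorphism whose
restriction to `B` is a minority operation. -/
def Blue {D : Type*} (Γ : Lang D) (B : Set D) : Prop :=
  ¬ Red Γ B ∧ ¬ Yellow Γ B ∧ ∃ h, IsPoly3 Γ h ∧ Cons3 h ∧ MinorityOn h B

namespace TOT
section TOT
variable {D : Type*} {Γ : Lang D}

lemma cons3_cases {w : D → D → D → D} (hc : Cons3 w) (x y z : D) :
    w x y z = x ∨ w x y z = y ∨ w x y z = z := by
  have := hc x y z; simpa using this

lemma cons3_idem {w : D → D → D → D} (hc : Cons3 w) (x : D) : w x x x = x := by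
  rcases cons3_cases hc x x x with h|h|h <;> exact h

lemma cons2_idem {f : D → D → D} (hc : Cons2 f) (x : D) : f x x = x := by
  rcases hc x x with h|h <;> exact h

lemma cons2_pair {f : D → D → D} (hc : Cons2 f) {a b x y : D}
    (hx : x ∈ ({a,b} : Set D)) (hy : y ∈ ({a,b} : Set D)) : f x y ∈ ({a,b} : Set D) := by
  rcases hc x y with h|h <;> rw [h] <;> assumption

lemma cons3_pair {w : D → D → D → D} (hc : Cons3 w) {a b x y z : D}
    (hx : x ∈ ({a,b} : Set D)) (hy : y ∈ ({a,b} : Set D)) (hz : z ∈ ({a,b} : Set D)) :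
    w x y z ∈ ({a,b} : Set D) := by
  rcases cons3_cases hc x y z with h|h|h <;> rw [h] <;> assumption

lemma semilattice_of_comm {f : D → D → D} (hc : Cons2 f) {a b : D} (h : f a b = f b a) :
    SemilatticeOn f {a, b} := by
  have idem : ∀ x, f x x = x := cons2_idem hc
  refine ⟨fun x _ => idem x, ?_, ?_⟩
  · intro x hx y hy
    simp only [Set.mem_insert_iff, Set.mem_singleton_iff] at hx hy
    rcases hx with rfl|rfl <;> rcases hy with rfl|rfl <;> simp [idem, h]
  · intro x hx y hy z hz
    simp only [Set.mem_insert_iff, Set.mem_singleton_iff] at hx hy hz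
    rcases hc a b with h1|h1 <;>
      have hba : f b a = f a b := h.symm <;>
      rcases hx with rfl|rfl <;> rcases hy with rfl|rfl <;> rcases hz with rfl|rfl <;>
      simp [idem, h1, hba]
lemma red_of_comm {f : D → D → D} (hp : IsPoly2 Γ f) (hc : Cons2 f) {a b : D}
    (h : f a b = f b a) : Red Γ {a, b} :=
  ⟨f, hp, hc, semilattice_of_comm hc h⟩

lemma bin_dual {f : D → D → D} (hp : IsPoly2 Γ f) (hc : Cons2 f) {a b : D}
    (hnr : ¬ Red Γ {a, b}) :
    (f a b = a ∧ f b a = b) ∨ (f a b = b ∧ f b a = a) := by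
  rcases hc a b with h1|h1 <;> rcases hc b a with h2|h2
  · exact Or.inl ⟨h1, h2⟩
  · exact absurd (red_of_comm hp hc (h1.trans h2.symm)) hnr
  · exact absurd (red_of_comm hp hc (h1.trans h2.symm)) hnr
  · exact Or.inr ⟨h1, h2⟩

lemma poly2_of_poly3_1 {K : D → D → D → D} (hp : IsPoly3 Γ K) :
    IsPoly2 Γ (fun x y => K x x y) :=
  fun R hR t₁ t₂ h1 h2 => hp R hR t₁ t₁ t₂ h1 h1 h2

lemma poly2_of_poly3_2 {K : D → D → D → D} (hp : IsPoly3 Γ K) :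
    IsPoly2 Γ (fun x y => K x y x) :=
  fun R hR t₁ t₂ h1 h2 => hp R hR t₁ t₂ t₁ h1 h2 h1

lemma poly2_of_poly3_3 {K : D → D → D → D} (hp : IsPoly3 Γ K) :
    IsPoly2 Γ (fun x y => K y x x) :=
  fun R hR t₁ t₂ h1 h2 => hp R hR t₂ t₁ t₁ h2 h1 h1

lemma cons3_val {K : D → D → D → D} (hc : Cons3 K) {a b x y z : D}
    (hx : x = a ∨ x = b) (hy : y = a ∨ y = b) (hz : z = a ∨ z = b) :
    K x y z = a ∨ K x y z = b := by
  rcases cons3_cases hc x y z with h|h|h <;> rw [h] <;> tauto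

lemma tern_dual1 {K : D → D → D → D} (hp : IsPoly3 Γ K) (hc : Cons3 K) {a b : D}
    (hnr : ¬ Red Γ {a, b}) :
    (K a a b = a ∧ K b b a = b) ∨ (K a a b = b ∧ K b b a = a) := by
  have hc2 : Cons2 (fun x y => K x x y) := by
    intro x y; simpa using cons3_cases hc x x y
  have := bin_dual (poly2_of_poly3_1 hp) hc2 hnr
  simpa using this

lemma tern_dual2 {K : D → D → D → D} (hp : IsPoly3 Γ K) (hc : Cons3 K) {a b : D}
    (hnr : ¬ Red Γ {a, b}) :
    (K a b a = a ∧ K b a b = b) ∨ (K a b a = b ∧ K b a b = a) := by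
  have hc2 : Cons2 (fun x y => K x y x) := by
    intro x y; rcases cons3_cases hc x y x with h|h|h <;> simp [h]
  have := bin_dual (poly2_of_poly3_2 hp) hc2 hnr
  simpa using this

lemma tern_dual3 {K : D → D → D → D} (hp : IsPoly3 Γ K) (hc : Cons3 K) {a b : D}
    (hnr : ¬ Red Γ {a, b}) :
    (K b a a = a ∧ K a b b = b) ∨ (K b a a = b ∧ K a b b = a) := by
  have hc2 : Cons2 (fun x y => K y x x) := by
    intro x y; rcases cons3_cases hc y x x with h|h|h <;> simp [h]
  have := bin_dual (poly2_of_poly3_3 hp) hc2 hnr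
  simpa using this

lemma majorityOn_of_pair {K : D → D → D → D} (hc : Cons3 K) {a b : D}
    (h1 : K a a b = a) (h2 : K a b a = a) (h3 : K b a a = a)
    (h4 : K b b a = b) (h5 : K b a b = b) (h6 : K a b b = b) :
    MajorityOn K {a, b} := by
  intro x hx y hy
  simp only [Set.mem_insert_iff, Set.mem_singleton_iff] at hx hy
  rcases hx with rfl|rfl <;> rcases hy with rfl|rfl <;>
    exact ⟨by simp [cons3_idem hc, *], by simp [cons3_idem hc, *], by simp [cons3_idem hc, *]⟩

lemma minorityOn_of_pair {K : D → D → D → D} (hc : Cons3 K) {a b : D}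
    (h1 : K a a b = b) (h2 : K a b a = b) (h3 : K b a a = b)
    (h4 : K b b a = a) (h5 : K b a b = a) (h6 : K a b b = a) :
    MinorityOn K {a, b} := by
  intro x hx y hy
  simp only [Set.mem_insert_iff, Set.mem_singleton_iff] at hx hy
  rcases hx with rfl|rfl <;> rcases hy with rfl|rfl <;>
    exact ⟨by simp [cons3_idem hc, *], by simp [cons3_idem hc, *], by simp [cons3_idem hc, *]⟩
lemma poly3_comp {K A B C : D → D → D → D} (hK : IsPoly3 Γ K) (hA : IsPoly3 Γ A)
    (hB : IsPoly3 Γ B) (hC : IsPoly3 Γ C) :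
    IsPoly3 Γ (fun x y z => K (A x y z) (B x y z) (C x y z)) :=
  fun R hR t₁ t₂ t₃ h1 h2 h3 =>
    hK R hR _ _ _ (hA R hR t₁ t₂ t₃ h1 h2 h3) (hB R hR t₁ t₂ t₃ h1 h2 h3)
      (hC R hR t₁ t₂ t₃ h1 h2 h3)

lemma poly3_comp2 {f : D → D → D} {A B : D → D → D → D} (hf : IsPoly2 Γ f)
    (hA : IsPoly3 Γ A) (hB : IsPoly3 Γ B) :
    IsPoly3 Γ (fun x y z => f (A x y z) (B x y z)) :=
  fun R hR t₁ t₂ t₃ h1 h2 h3 =>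
    hf R hR _ _ (hA R hR t₁ t₂ t₃ h1 h2 h3) (hB R hR t₁ t₂ t₃ h1 h2 h3)

lemma poly3_proj1 : IsPoly3 Γ (fun x _ _ => x) := fun _ _ t₁ _ _ h1 _ _ => h1
lemma poly3_proj2 : IsPoly3 Γ (fun _ y _ => y) := fun _ _ _ t₂ _ _ h2 _ => h2
lemma poly3_proj3 : IsPoly3 Γ (fun _ _ z => z) := fun _ _ _ _ t₃ _ _ h3 => h3

lemma cons3_comp {K A B C : D → D → D → D} (hK : Cons3 K) (hA : Cons3 A)
    (hB : Cons3 B) (hC : Cons3 C) :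
    Cons3 (fun x y z => K (A x y z) (B x y z) (C x y z)) := by
  intro x y z
  rcases cons3_cases hK (A x y z) (B x y z) (C x y z) with h|h|h <;>
    simp only [h] <;>
    [rcases cons3_cases hA x y z with h'|h'|h';
     rcases cons3_cases hB x y z with h'|h'|h';
     rcases cons3_cases hC x y z with h'|h'|h'] <;>
    simp [h']

lemma cons3_comp2 {f : D → D → D} {A B : D → D → D → D} (hf : Cons2 f)
    (hA : Cons3 A) (hB : Cons3 B) :
    Cons3 (fun x y z => f (A x y z) (B x y z)) := by
  intro x y z
  rcases hf (A x y z) (B x y z) with h|h <;> simp only [h] <;>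
    [rcases cons3_cases hA x y z with h'|h'|h';
     rcases cons3_cases hB x y z with h'|h'|h'] <;>
    simp [h']

lemma cons3_projs : Cons3 (fun x _ _ : D => x) ∧ Cons3 (fun _ y _ : D => y) ∧
    Cons3 (fun _ _ z : D => z) :=
  ⟨fun _ _ _ => by simp, fun _ _ _ => by simp, fun _ _ _ => by simp⟩

lemma stage1_pres_maj {K w : D → D → D → D} {B : Set D} (hwc : Cons3 w)
    (hM : MajorityOn K B) :
    MajorityOn (fun x y z => w (K x y z) (K y z x) (K z x y)) B := by
  intro x hx y hy
  obtain ⟨k1, k2, k3⟩ := hM x hx y hy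
  exact ⟨by simp [k1, k2, k3, cons3_idem hwc],
    by simp [k1, k2, k3, cons3_idem hwc], by simp [k1, k2, k3, cons3_idem hwc]⟩

lemma stage1_pres_min {K w : D → D → D → D} {B : Set D} (hwc : Cons3 w)
    (hM : MinorityOn K B) :
    MinorityOn (fun x y z => w (K x y z) (K y z x) (K z x y)) B := by
  intro x hx y hy
  obtain ⟨k1, k2, k3⟩ := hM x hx y hy
  exact ⟨by simp [k1, k2, k3, cons3_idem hwc],
    by simp [k1, k2, k3, cons3_idem hwc], by simp [k1, k2, k3, cons3_idem hwc]⟩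

lemma stage1_majmin {K w : D → D → D → D} {a b : D} (hKp : IsPoly3 Γ K) (hKc : Cons3 K)
    (hwp : IsPoly3 Γ w) (hwc : Cons3 w) (hnr : ¬ Red Γ {a, b})
    (hsym : ∀ u v : D, (u = a ∨ u = b) → (v = a ∨ v = b) →
      w u u v = w u v u ∧ w u v u = w v u u) :
    MajorityOn (fun x y z => w (K x y z) (K y z x) (K z x y)) {a, b} ∨
    MinorityOn (fun x y z => w (K x y z) (K y z x) (K z x y)) {a, b} := by
  have hwcyc : ∀ u v t : D, (u = a ∨ u = b) → (v = a ∨ v = b) → (t = a ∨ t = b) →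
      w u v t = w v t u := by
    intro u v t hu hv ht
    by_cases h1 : u = v
    · subst h1; exact (hsym u t hu ht).1
    by_cases h2 : v = t
    · subst h2; exact ((hsym v u hv hu).1.trans (hsym v u hv hu).2).symm
    by_cases h3 : u = t
    · subst h3; exact (hsym u v hu hv).2
    · exfalso
      rcases hu with rfl|rfl <;> rcases hv with rfl|rfl <;> rcases ht with rfl|rfl <;>
        simp_all
  set K1 : D → D → D → D := fun x y z => w (K x y z) (K y z x) (K z x y) with hK1
  have hp1 : IsPoly3 Γ K1 := poly3_comp hwp hKp
    (fun R hR t₁ t₂ t₃ h1 h2 h3 => hKp R hR t₂ t₃ t₁ h2 h3 h1)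
    (fun R hR t₁ t₂ t₃ h1 h2 h3 => hKp R hR t₃ t₁ t₂ h3 h1 h2)
  have hc1 : Cons3 K1 := by
    intro x y z
    have h1 := cons3_cases hKc x y z
    have h2 := cons3_cases hKc y z x
    have h3 := cons3_cases hKc z x y
    rcases cons3_cases hwc (K x y z) (K y z x) (K z x y) with h|h|h <;>
      rw [hK1] <;> simp only [] <;> rw [h] <;> simp <;> tauto
  have hv : ∀ x y z : D, (x = a ∨ x = b) → (y = a ∨ y = b) → (z = a ∨ z = b) →
      K x y z = a ∨ K x y z = b := fun x y z hx hy hz => cons3_val hKc hx hy hz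
  have la : a = a ∨ a = b := Or.inl rfl
  have lb : b = a ∨ b = b := Or.inr rfl
  have e1 : K1 a a b = K1 a b a :=
    hwcyc _ _ _ (hv a a b la la lb) (hv a b a la lb la) (hv b a a lb la la)
  have e2 : K1 a b a = K1 b a a :=
    hwcyc _ _ _ (hv a b a la lb la) (hv b a a lb la la) (hv a a b la la lb)
  have e1' : K1 b b a = K1 b a b :=
    hwcyc _ _ _ (hv b b a lb lb la) (hv b a b lb la lb) (hv a b b la lb lb)
  have e2' : K1 b a b = K1 a b b :=
    hwcyc _ _ _ (hv b a b lb la lb) (hv a b b la lb lb) (hv b b a lb lb la)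
  rcases tern_dual1 hp1 hc1 hnr with ⟨d1, d2⟩|⟨d1, d2⟩
  · exact Or.inl (majorityOn_of_pair hc1 d1 (e1.symm.trans d1)
      (e2.symm.trans (e1.symm.trans d1)) d2 (e1'.symm.trans d2)
      (e2'.symm.trans (e1'.symm.trans d2)))
  · exact Or.inr (minorityOn_of_pair hc1 d1 (e1.symm.trans d1)
      (e2.symm.trans (e1.symm.trans d1)) d2 (e1'.symm.trans d2)
      (e2'.symm.trans (e1'.symm.trans d2)))
/-- The magic inner term fixing a minority into a majority. -/
def Tterm (K m : D → D → D → D) : D → D → D → D :=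
  fun x y z => K x (K x (m x y z) (m y z x)) (m (m z y x) (m y x z) (m x z y))

/-- The wrapped combinator. -/
def Dterm (K m : D → D → D → D) : D → D → D → D :=
  fun x y z => K (K x y z) (Tterm K m x y z) (K x y z)

lemma cons3_mk {f : D → D → D → D}
    (h : ∀ x y z : D, f x y z = x ∨ f x y z = y ∨ f x y z = z) : Cons3 f := by
  intro x y z; rcases h x y z with h'|h'|h' <;> simp [h']

lemma cons3_T {K m : D → D → D → D} (hKc : Cons3 K) (hmc : Cons3 m) :
    Cons3 (Tterm K m) := by
  apply cons3_mk
  intro x y z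
  simp only [Tterm]
  rcases cons3_cases hKc x (K x (m x y z) (m y z x)) (m (m z y x) (m y x z) (m x z y))
    with h|h|h
  · tauto
  · rw [h]
    rcases cons3_cases hKc x (m x y z) (m y z x) with h'|h'|h'
    · tauto
    · rw [h']; rcases cons3_cases hmc x y z with h''|h''|h'' <;> tauto
    · rw [h']; rcases cons3_cases hmc y z x with h''|h''|h'' <;> tauto
  · rw [h]
    rcases cons3_cases hmc (m z y x) (m y x z) (m x z y) with h'|h'|h'
    · rw [h']; rcases cons3_cases hmc z y x with h''|h''|h'' <;> tauto
    · rw [h']; rcases cons3_cases hmc y x z with h''|h''|h'' <;> tauto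
    · rw [h']; rcases cons3_cases hmc x z y with h''|h''|h'' <;> tauto

lemma cons3_D {K m : D → D → D → D} (hKc : Cons3 K) (hmc : Cons3 m) :
    Cons3 (Dterm K m) := by
  apply cons3_mk
  intro x y z
  simp only [Dterm]
  rcases cons3_cases hKc (K x y z) (Tterm K m x y z) (K x y z) with h|h|h <;> rw [h]
  · rcases cons3_cases hKc x y z with h'|h'|h' <;> tauto
  · rcases cons3_cases (cons3_T hKc hmc) x y z with h'|h'|h' <;> tauto
  · rcases cons3_cases hKc x y z with h'|h'|h' <;> tauto

lemma poly3_T {K m : D → D → D → D} (hKp : IsPoly3 Γ K) (hmp : IsPoly3 Γ m) :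
    IsPoly3 Γ (Tterm K m) := by
  apply poly3_comp hKp poly3_proj1
  · exact poly3_comp hKp poly3_proj1 hmp
      (fun R hR t₁ t₂ t₃ h1 h2 h3 => hmp R hR t₂ t₃ t₁ h2 h3 h1)
  · exact poly3_comp hmp
      (fun R hR t₁ t₂ t₃ h1 h2 h3 => hmp R hR t₃ t₂ t₁ h3 h2 h1)
      (fun R hR t₁ t₂ t₃ h1 h2 h3 => hmp R hR t₂ t₁ t₃ h2 h1 h3)
      (fun R hR t₁ t₂ t₃ h1 h2 h3 => hmp R hR t₁ t₃ t₂ h1 h3 h2)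

lemma poly3_D {K m : D → D → D → D} (hKp : IsPoly3 Γ K) (hmp : IsPoly3 Γ m) :
    IsPoly3 Γ (Dterm K m) := by
  unfold Dterm; exact poly3_comp hKp hKp (poly3_T hKp hmp) hKp

lemma stage2_pres_maj {K m : D → D → D → D} {B : Set D} (hKc : Cons3 K) (hmc : Cons3 m)
    (hM : MajorityOn K B) : MajorityOn (Dterm K m) B := by
  intro x hx y hy
  obtain ⟨k1, k2, k3⟩ := hM x hx y hy
  have hKi := cons3_idem hKc
  have hT : ∀ u v t : D, Tterm K m u v t = u ∨ Tterm K m u v t = v ∨ Tterm K m u v t = t :=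
    fun u v t => cons3_cases (cons3_T hKc hmc) u v t
  refine ⟨?_, ?_, ?_⟩
  · rcases hT x x y with h|h|h <;> simp [Dterm, k1, k2, h, hKi]
  · rcases hT x y x with h|h|h <;> simp [Dterm, k1, k2, h, hKi]
  · rcases hT y x x with h|h|h <;> simp [Dterm, k2, k3, h, hKi]

lemma stage2_new {K m : D → D → D → D} {a b : D} (hKc : Cons3 K) (hmc : Cons3 m)
    (hmM : MajorityOn m {a, b}) (hKm : MinorityOn K {a, b}) :
    MajorityOn (Dterm K m) {a, b} := by
  intro x hx y hy
  obtain ⟨m1, m2, m3⟩ := hmM x hx y hy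
  obtain ⟨m1', m2', m3'⟩ := hmM y hy x hx
  obtain ⟨k1, k2, k3⟩ := hKm x hx y hy
  obtain ⟨k1', k2', k3'⟩ := hKm y hy x hx
  have hKi := cons3_idem hKc
  have hmi := cons3_idem hmc
  refine ⟨?_, ?_, ?_⟩ <;>
    simp [Dterm, Tterm, m1, m2, m3, m1', m2', m3', k1, k2, k3, k1', k2', k3', hKi, hmi]

lemma stage2_blue {K m : D → D → D → D} {a b : D} (hKc : Cons3 K)
    (hmp : IsPoly3 Γ m) (hmc : Cons3 m) (hnr : ¬ Red Γ {a, b}) (hny : ¬ Yellow Γ {a, b})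
    (hKmin : MinorityOn K {a, b}) : MinorityOn (Dterm K m) {a, b} := by
  have core : ∀ x y : D, ({x, y} : Set D) = {a, b} →
      Dterm K m x x y = y ∧ Dterm K m x y x = y ∧ Dterm K m y x x = y := by
    intro x y hset
    have hx : x ∈ ({a, b} : Set D) := by rw [← hset]; simp
    have hy : y ∈ ({a, b} : Set D) := by rw [← hset]; simp
    have hnr' : ¬ Red Γ {x, y} := by rw [hset]; exact hnr
    have hny' : ¬ Yellow Γ {x, y} := by rw [hset]; exact hny
    obtain ⟨k1, k2, k3⟩ := hKmin x hx y hy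
    obtain ⟨k1', k2', k3'⟩ := hKmin y hy x hx
    have hKi := cons3_idem hKc
    have hmi := cons3_idem hmc
    rcases tern_dual1 hmp hmc hnr' with ⟨p1, q1⟩|⟨p1, q1⟩ <;>
      rcases tern_dual2 hmp hmc hnr' with ⟨p2, q2⟩|⟨p2, q2⟩ <;>
      rcases tern_dual3 hmp hmc hnr' with ⟨p3, q3⟩|⟨p3, q3⟩ <;>
      first
        | exact absurd
            (⟨hnr', m, hmp, hmc, majorityOn_of_pair hmc p1 p2 p3 q1 q2 q3⟩ :
              Yellow Γ {x, y}) hny'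
        | (refine ⟨?_, ?_, ?_⟩ <;>
            simp [Dterm, Tterm, p1, p2, p3, q1, q2, q3, k1, k2, k3, k1', k2', k3',
              hKi, hmi])
  intro x hx y hy
  simp only [Set.mem_insert_iff, Set.mem_singleton_iff] at hx hy
  have hDi := cons3_idem (cons3_D hKc hmc)
  rcases hx with rfl|rfl <;> rcases hy with rfl|rfl
  · exact ⟨hDi _, hDi _, hDi _⟩
  · exact core x y rfl
  · exact core x y (Set.pair_comm x y)
  · exact ⟨hDi _, hDi _, hDi _⟩
lemma mem_pair_of_or {a b x : D} (h : x = a ∨ x = b) : x ∈ ({a, b} : Set D) := by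
  rcases h with rfl|rfl <;> simp

lemma stage1_poly {K w : D → D → D → D} (hwp : IsPoly3 Γ w) (hKp : IsPoly3 Γ K) :
    IsPoly3 Γ (fun x y z => w (K x y z) (K y z x) (K z x y)) :=
  poly3_comp hwp hKp
    (fun R hR t₁ t₂ t₃ h1 h2 h3 => hKp R hR t₂ t₃ t₁ h2 h3 h1)
    (fun R hR t₁ t₂ t₃ h1 h2 h3 => hKp R hR t₃ t₁ t₂ h3 h1 h2)

lemma stage1_cons {K w : D → D → D → D} (hwc : Cons3 w) (hKc : Cons3 K) :
    Cons3 (fun x y z => w (K x y z) (K y z x) (K z x y)) := by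
  apply cons3_mk
  intro x y z
  rcases cons3_cases hwc (K x y z) (K y z x) (K z x y) with h|h|h <;> rw [h]
  · rcases cons3_cases hKc x y z with h'|h'|h' <;> tauto
  · rcases cons3_cases hKc y z x with h'|h'|h' <;> tauto
  · rcases cons3_cases hKc z x y with h'|h'|h' <;> tauto

lemma build_f (Γ : Lang D) (s : Finset (D × D)) :
    ∃ f, IsPoly2 Γ f ∧ Cons2 f ∧
      ∀ p ∈ s, Red Γ {p.1, p.2} → f p.1 p.2 = f p.2 p.1 := by
  classical
  induction s using Finset.induction_on with
  | empty =>
      exact ⟨fun x _ => x, fun R hR t₁ t₂ h1 h2 => h1, fun x y => Or.inl rfl, by simp⟩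
  | @insert p s hps ih =>
      obtain ⟨f, hfp, hfc, hinv⟩ := ih
      by_cases hR : Red Γ ({p.1, p.2} : Set D)
      · obtain ⟨g, hgp, hgc, hgs⟩ := hR
        refine ⟨fun x y => g (f x y) (f y x), ?_, ?_, ?_⟩
        · intro R hR' t₁ t₂ h1 h2
          exact hgp R hR' _ _ (hfp R hR' t₁ t₂ h1 h2) (hfp R hR' t₂ t₁ h2 h1)
        · intro x y
          show g (f x y) (f y x) = x ∨ g (f x y) (f y x) = y
          rcases hgc (f x y) (f y x) with h|h <;> rw [h]
          · exact hfc x y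
          · rcases hfc y x with h'|h' <;> tauto
        · intro q hq hRq
          rcases Finset.mem_insert.mp hq with rfl|hq'
          · exact hgs.2.1 _ (mem_pair_of_or (hfc q.1 q.2)) _ (mem_pair_of_or (hfc q.2 q.1).symm)
          · have h := hinv q hq' hRq
            show g (f q.1 q.2) (f q.2 q.1) = g (f q.2 q.1) (f q.1 q.2)
            rw [h]
      · refine ⟨f, hfp, hfc, ?_⟩
        intro q hq hRq
        rcases Finset.mem_insert.mp hq with rfl|hq'
        · exact absurd hRq hR
        · exact hinv q hq' hRq

lemma exists_fstar [Fintype D] (Γ : Lang D) :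
    ∃ f, IsPoly2 Γ f ∧ Cons2 f ∧ ∀ a b : D,
      (Red Γ {a, b} → SemilatticeOn f {a, b}) ∧
      (¬ Red Γ {a, b} → ∀ x ∈ ({a, b} : Set D), ∀ y ∈ ({a, b} : Set D), f x y = x) := by
  classical
  obtain ⟨f, hfp, hfc, hinv⟩ := build_f Γ Finset.univ
  have hfc' : Cons2 (fun x y => f (f x y) (f y x)) := by
    intro x y
    show f (f x y) (f y x) = x ∨ f (f x y) (f y x) = y
    rcases hfc (f x y) (f y x) with h|h <;> rw [h]
    · exact hfc x y
    · rcases hfc y x with h'|h' <;> tauto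
  refine ⟨fun x y => f (f x y) (f y x), ?_, hfc', ?_⟩
  · intro R hR' t₁ t₂ h1 h2
    exact hfp R hR' _ _ (hfp R hR' t₁ t₂ h1 h2) (hfp R hR' t₂ t₁ h2 h1)
  · intro a b
    constructor
    · intro hR
      have hcomm : f a b = f b a := hinv (a, b) (Finset.mem_univ _) hR
      have : f (f a b) (f b a) = f (f b a) (f a b) := by rw [hcomm]
      exact semilattice_of_comm hfc' this
    · intro hnr x hx y hy
      simp only [Set.mem_insert_iff, Set.mem_singleton_iff] at hx hy
      have hfi := cons2_idem hfc
      rcases hx with rfl|rfl <;> rcases hy with rfl|rfl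
      · simp [hfi]
      · rcases bin_dual hfp hfc hnr with ⟨h1, h2⟩|⟨h1, h2⟩ <;> simp [h1, h2, hfi]
      · rcases bin_dual hfp hfc hnr with ⟨h1, h2⟩|⟨h1, h2⟩ <;> simp [h1, h2, hfi]
      · simp [hfi]

lemma build_K (Γ : Lang D) (s : Finset (D × D)) :
    ∃ K, IsPoly3 Γ K ∧ Cons3 K ∧ ∀ p ∈ s,
      (Yellow Γ {p.1, p.2} → MajorityOn K {p.1, p.2}) ∧
      (Blue Γ {p.1, p.2} → MinorityOn K {p.1, p.2}) := by
  classical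
  induction s using Finset.induction_on with
  | empty =>
      exact ⟨fun x _ _ => x, poly3_proj1, fun x y z => by simp, by simp⟩
  | @insert p s hps ih =>
      obtain ⟨K, hKp, hKc, hinv⟩ := ih
      by_cases hY : Yellow Γ ({p.1, p.2} : Set D)
      · obtain ⟨m, hmp, hmc, hmM⟩ := hY.2
        have hp1 : IsPoly3 Γ (fun x y z => m (K x y z) (K y z x) (K z x y)) :=
          stage1_poly hmp hKp
        have hc1 : Cons3 (fun x y z => m (K x y z) (K y z x) (K z x y)) :=
          stage1_cons hmc hKc
        have hsym : ∀ u v : D, (u = p.1 ∨ u = p.2) → (v = p.1 ∨ v = p.2) →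
            m u u v = m u v u ∧ m u v u = m v u u := by
          intro u v hu hv
          obtain ⟨h1, h2, h3⟩ := hmM u (mem_pair_of_or hu) v (mem_pair_of_or hv)
          exact ⟨h1.trans h2.symm, h2.trans h3.symm⟩
        rcases stage1_majmin hKp hKc hmp hmc hY.1 hsym with hMaj | hMin
        · refine ⟨_, hp1, hc1, ?_⟩
          intro q hq
          rcases Finset.mem_insert.mp hq with rfl|hq'
          · exact ⟨fun _ => hMaj, fun hB => (hB.2.1 hY).elim⟩
          · obtain ⟨hqY, hqB⟩ := hinv q hq'
            exact ⟨fun h => stage1_pres_maj hmc (hqY h),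
              fun h => stage1_pres_min hmc (hqB h)⟩
        · refine ⟨Dterm (fun x y z => m (K x y z) (K y z x) (K z x y)) m,
            poly3_D hp1 hmp, cons3_D hc1 hmc, ?_⟩
          intro q hq
          rcases Finset.mem_insert.mp hq with rfl|hq'
          · exact ⟨fun _ => stage2_new hc1 hmc hmM hMin, fun hB => (hB.2.1 hY).elim⟩
          · obtain ⟨hqY, hqB⟩ := hinv q hq'
            exact ⟨fun h => stage2_pres_maj hc1 hmc (stage1_pres_maj hmc (hqY h)),
              fun h => stage2_blue hc1 hmp hmc h.1 h.2.1 (stage1_pres_min hmc (hqB h))⟩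
      · by_cases hB : Blue Γ ({p.1, p.2} : Set D)
        · obtain ⟨w, hwp, hwc, hwMin⟩ := hB.2.2
          have hp1 : IsPoly3 Γ (fun x y z => w (K x y z) (K y z x) (K z x y)) :=
            stage1_poly hwp hKp
          have hc1 : Cons3 (fun x y z => w (K x y z) (K y z x) (K z x y)) :=
            stage1_cons hwc hKc
          have hsym : ∀ u v : D, (u = p.1 ∨ u = p.2) → (v = p.1 ∨ v = p.2) →
              w u u v = w u v u ∧ w u v u = w v u u := by
            intro u v hu hv
            obtain ⟨h1, h2, h3⟩ := hwMin u (mem_pair_of_or hu) v (mem_pair_of_or hv)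
            exact ⟨h1.trans h2.symm, h2.trans h3.symm⟩
          rcases stage1_majmin hKp hKc hwp hwc hB.1 hsym with hMaj | hMin
          · exact absurd (⟨hB.1, _, hp1, hc1, hMaj⟩ : Yellow Γ {p.1, p.2}) hB.2.1
          · refine ⟨_, hp1, hc1, ?_⟩
            intro q hq
            rcases Finset.mem_insert.mp hq with rfl|hq'
            · exact ⟨fun hy => (hY hy).elim, fun _ => hMin⟩
            · obtain ⟨hqY, hqB⟩ := hinv q hq'
              exact ⟨fun h => stage1_pres_maj hwc (hqY h),
                fun h => stage1_pres_min hwc (hqB h)⟩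
        · refine ⟨K, hKp, hKc, ?_⟩
          intro q hq
          rcases Finset.mem_insert.mp hq with rfl|hq'
          · exact ⟨fun hy => (hY hy).elim, fun hb => (hB hb).elim⟩
          · exact hinv q hq'
lemma fold_red {f : D → D → D} (hc : Cons2 f) {a b : D} (hs : SemilatticeOn f {a, b}) :
    ∀ x ∈ ({a, b} : Set D), ∀ y ∈ ({a, b} : Set D), ∀ z ∈ ({a, b} : Set D), ∀ w : D,
      (w = x ∨ w = y ∨ w = z) → f (f (f w x) y) z = f (f x y) z := by
  intro x hx y hy z hz w hw
  have hid := cons2_idem hc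
  have hcomm : f a b = f b a := hs.2.1 a (by simp) b (by simp)
  simp only [Set.mem_insert_iff, Set.mem_singleton_iff] at hx hy hz
  rcases hc a b with hab|hab <;>
    have hba : f b a = f a b := hcomm.symm <;>
    rcases hx with rfl|rfl <;> rcases hy with rfl|rfl <;> rcases hz with rfl|rfl <;>
    rcases hw with rfl|rfl|rfl <;>
    simp [hid, hab, hba]

section Assembly
variable [Fintype D]

theorem three_ops (Γ : Lang D) :
    ∃ (f : D → D → D) (g h : D → D → D → D),
      IsPoly2 Γ f ∧ Cons2 f ∧ IsPoly3 Γ g ∧ Cons3 g ∧ IsPoly3 Γ h ∧ Cons3 h ∧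
      ∀ a b : D, a ≠ b →
        ((Red Γ {a, b} → SemilatticeOn f {a, b}) ∧
         (¬ Red Γ {a, b} → ∀ x ∈ ({a, b} : Set D), ∀ y ∈ ({a, b} : Set D), f x y = x)) ∧
        ((Yellow Γ {a, b} → MajorityOn g {a, b}) ∧
         (Blue Γ {a, b} → ∀ x ∈ ({a, b} : Set D), ∀ y ∈ ({a, b} : Set D),
            ∀ z ∈ ({a, b} : Set D), g x y z = x) ∧
         (Red Γ {a, b} → ∀ x ∈ ({a, b} : Set D), ∀ y ∈ ({a, b} : Set D),
            ∀ z ∈ ({a, b} : Set D), g x y z = f (f x y) z)) ∧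
        ((Blue Γ {a, b} → MinorityOn h {a, b}) ∧
         (Yellow Γ {a, b} → ∀ x ∈ ({a, b} : Set D), ∀ y ∈ ({a, b} : Set D),
            ∀ z ∈ ({a, b} : Set D), h x y z = x) ∧
         (Red Γ {a, b} → ∀ x ∈ ({a, b} : Set D), ∀ y ∈ ({a, b} : Set D),
            ∀ z ∈ ({a, b} : Set D), h x y z = f (f x y) z)) := by
  classical
  obtain ⟨f, hfp, hfc, hfprop⟩ := exists_fstar Γ
  obtain ⟨K, hKp, hKc, hKprop⟩ := build_K Γ Finset.univ
  -- the two inner ternary terms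
  set tg : D → D → D → D := fun x y z => K y (K x y z) z with htg
  set th : D → D → D → D := fun x y z => K x x (K x y z) with hth
  have htgp : IsPoly3 Γ tg := poly3_comp hKp poly3_proj2 hKp poly3_proj3
  have hthp : IsPoly3 Γ th := poly3_comp hKp poly3_proj1 poly3_proj1 hKp
  have htgc : Cons3 tg := by
    apply cons3_mk; intro x y z
    rcases cons3_cases hKc y (K x y z) z with h|h|h <;> rw [htg] <;> simp only [] <;> rw [h]
    · tauto
    · rcases cons3_cases hKc x y z with h'|h'|h' <;> tauto
    · tauto
  have hthc : Cons3 th := by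
    apply cons3_mk; intro x y z
    rcases cons3_cases hKc x x (K x y z) with h|h|h <;> rw [hth] <;> simp only [] <;> rw [h]
    · tauto
    · tauto
    · rcases cons3_cases hKc x y z with h'|h'|h' <;> tauto
  set g : D → D → D → D := fun x y z => f (f (f (tg x y z) x) y) z with hg
  set h : D → D → D → D := fun x y z => f (f (f (th x y z) x) y) z with hh
  have hgp : IsPoly3 Γ g :=
    poly3_comp2 hfp (poly3_comp2 hfp (poly3_comp2 hfp htgp poly3_proj1) poly3_proj2)
      poly3_proj3
  have hhp : IsPoly3 Γ h :=
    poly3_comp2 hfp (poly3_comp2 hfp (poly3_comp2 hfp hthp poly3_proj1) poly3_proj2)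
      poly3_proj3
  have hcons_aux : ∀ W : D → D → D → D, Cons3 W →
      Cons3 (fun x y z => f (f (f (W x y z) x) y) z) := by
    intro W hWc
    apply cons3_mk; intro x y z
    rcases hfc (f (f (W x y z) x) y) z with h1|h1 <;> rw [h1]
    · rcases hfc (f (W x y z) x) y with h2|h2 <;> rw [h2]
      · rcases hfc (W x y z) x with h3|h3 <;> rw [h3]
        · rcases cons3_cases hWc x y z with h4|h4|h4 <;> tauto
        · tauto
      · tauto
    · tauto
  have hgc : Cons3 g := hcons_aux tg htgc
  have hhc : Cons3 h := hcons_aux th hthc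
  refine ⟨f, g, h, hfp, hfc, hgp, hgc, hhp, hhc, ?_⟩
  intro a b _
  obtain ⟨hfa, hfnr⟩ := hfprop a b
  obtain ⟨hKY, hKB⟩ := hKprop (a, b) (Finset.mem_univ _)
  refine ⟨⟨hfa, hfnr⟩, ⟨?_, ?_, ?_⟩, ⟨?_, ?_, ?_⟩⟩
  · -- Yellow → MajorityOn g
    intro hY
    have hM := hKY hY
    have fp := hfnr hY.1
    intro x hx y hy
    obtain ⟨e1, e2, e3⟩ := hM x hx y hy
    obtain ⟨e1', e2', e3'⟩ := hM y hy x hx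
    have hKix := cons3_idem hKc x
    have hKiy := cons3_idem hKc y
    have fxx := fp x hx x hx
    have fxy := fp x hx y hy
    have fyx := fp y hy x hx
    have fyy := fp y hy y hy
    refine ⟨?_, ?_, ?_⟩ <;>
      simp only [hg, htg, e1, e2, e3, e1', e2', e3', hKix, hKiy, fxx, fxy, fyx, fyy]
  · -- Blue → g is first projection
    intro hB
    have hMin := hKB hB
    have fp := hfnr hB.1
    obtain ⟨e1, e2, e3⟩ := hMin a (by simp) b (by simp)
    obtain ⟨e1', e2', e3'⟩ := hMin b (by simp) a (by simp)
    have hKia := cons3_idem hKc a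
    have hKib := cons3_idem hKc b
    have faa := fp a (by simp) a (by simp)
    have fab := fp a (by simp) b (by simp)
    have fba := fp b (by simp) a (by simp)
    have fbb := fp b (by simp) b (by simp)
    intro x hx y hy z hz
    simp only [Set.mem_insert_iff, Set.mem_singleton_iff] at hx hy hz
    rcases hx with rfl|rfl <;> rcases hy with rfl|rfl <;> rcases hz with rfl|rfl <;>
      simp only [hg, htg, e1, e2, e3, e1', e2', e3', hKia, hKib, faa, fab, fba, fbb]
  · -- Red → g is the semilattice fold
    intro hR x hx y hy z hz
    exact fold_red hfc (hfa hR) x hx y hy z hz (tg x y z) (cons3_cases htgc x y z)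
  · -- Blue → MinorityOn h
    intro hB
    have hMin := hKB hB
    have fp := hfnr hB.1
    intro x hx y hy
    obtain ⟨e1, e2, e3⟩ := hMin x hx y hy
    obtain ⟨e1', e2', e3'⟩ := hMin y hy x hx
    have hKix := cons3_idem hKc x
    have hKiy := cons3_idem hKc y
    have fxx := fp x hx x hx
    have fxy := fp x hx y hy
    have fyx := fp y hy x hx
    have fyy := fp y hy y hy
    refine ⟨?_, ?_, ?_⟩ <;>
      simp only [hh, hth, e1, e2, e3, e1', e2', e3', hKix, hKiy, fxx, fxy, fyx, fyy]
  · -- Yellow → h is first projection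
    intro hY
    have hM := hKY hY
    have fp := hfnr hY.1
    obtain ⟨e1, e2, e3⟩ := hM a (by simp) b (by simp)
    obtain ⟨e1', e2', e3'⟩ := hM b (by simp) a (by simp)
    have hKia := cons3_idem hKc a
    have hKib := cons3_idem hKc b
    have faa := fp a (by simp) a (by simp)
    have fab := fp a (by simp) b (by simp)
    have fba := fp b (by simp) a (by simp)
    have fbb := fp b (by simp) b (by simp)
    intro x hx y hy z hz
    simp only [Set.mem_insert_iff, Set.mem_singleton_iff] at hx hy hz
    rcases hx with rfl|rfl <;> rcases hy with rfl|rfl <;> rcases hz with rfl|rfl <;>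
      simp only [hh, hth, e1, e2, e3, e1', e2', e3', hKia, hKib, faa, fab, fba, fbb]
  · -- Red → h is the semilattice fold
    intro hR x hx y hy z hz
    exact fold_red hfc (hfa hR) x hx y hy z hz (th x y z) (cons3_cases hthc x y z)

end Assembly

end TOT
end TOT

/-- **The Three Operations Theorem.** If every 2-element subset `B ⊆ D` admits
a conservative polymorphism of `Γ` that is a semilattice, majority or minority operation on
`B`, then there are conservative polymorphisms `f*` (binary), `g*`, `h*` (ternary) of `Γ`
behaving on every 2-element subset `B = {a,b}` according to the colour of `B`. -/
theorem three_operations_theorem {D : Type*} [Fintype D] (Γ : Lang D) (hΓ : Γ.Finite)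
    (hyp : ∀ a b : D, a ≠ b →
      (∃ f, IsPoly2 Γ f ∧ Cons2 f ∧ SemilatticeOn f {a, b}) ∨
      (∃ g, IsPoly3 Γ g ∧ Cons3 g ∧ MajorityOn g {a, b}) ∨
      (∃ h, IsPoly3 Γ h ∧ Cons3 h ∧ MinorityOn h {a, b})) :
    ∃ (f : D → D → D) (g h : D → D → D → D),
      IsPoly2 Γ f ∧ Cons2 f ∧ IsPoly3 Γ g ∧ Cons3 g ∧ IsPoly3 Γ h ∧ Cons3 h ∧
      ∀ a b : D, a ≠ b →
        ((Red Γ {a, b} → SemilatticeOn f {a, b}) ∧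
         (¬ Red Γ {a, b} → ∀ x ∈ ({a, b} : Set D), ∀ y ∈ ({a, b} : Set D), f x y = x)) ∧
        ((Yellow Γ {a, b} → MajorityOn g {a, b}) ∧
         (Blue Γ {a, b} → ∀ x ∈ ({a, b} : Set D), ∀ y ∈ ({a, b} : Set D),
            ∀ z ∈ ({a, b} : Set D), g x y z = x) ∧
         (Red Γ {a, b} → ∀ x ∈ ({a, b} : Set D), ∀ y ∈ ({a, b} : Set D),
            ∀ z ∈ ({a, b} : Set D), g x y z = f (f x y) z)) ∧
        ((Blue Γ {a, b} → MinorityOn h {a, b}) ∧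
         (Yellow Γ {a, b} → ∀ x ∈ ({a, b} : Set D), ∀ y ∈ ({a, b} : Set D),
            ∀ z ∈ ({a, b} : Set D), h x y z = x) ∧
         (Red Γ {a, b} → ∀ x ∈ ({a, b} : Set D), ∀ y ∈ ({a, b} : Set D),
            ∀ z ∈ ({a, b} : Set D), h x y z = f (f x y) z)) := by
  classical
  exact TOT.three_ops Γ
end

section
/- Let P = (X, D, C) be a consistent restriction of P^c_M(Γ). Let f_i and f_j be operation symbols of M, of arities a_i and a_j. Suppose C^{R*}_{f_i(t_1,...,t_{a_i})} is a constraint of P (for some R* ∈ Γ and t_1,...,t_{a_i} ∈ R*) and let t'_1,...,t'_{a_j} be tuples belonging to the current relation R(C^{R*}_{f_i(t_1,...,t_{a_i})}). Then R(C^{R*}_{f_j(t'_1,...,t'_{a_j})}) ⊆ R(C^{R*}_{f_i(t_1,...,t_{a_i})}). -/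
/-- The signature of a linear strong Mal'tsev condition: `m` operation symbols
`f_0, …, f_{m-1}` together with their arities. -/
structure MalcevSig where
  m : ℕ
  arity : Fin m → ℕ

/-- The indicator variables of `P^c_M(Γ)`: one variable `x_{f_i(d_1,…,d_{a_i})}` for every
operation symbol `f_i` and every tuple `(d_1,…,d_{a_i}) ∈ D^{a_i}`. -/
abbrev MVar (σ : MalcevSig) (D : Type*) := Σ i : Fin σ.m, Fin (σ.arity i) → D

/-- A constraint over variables `V` and domain `D`: an arity `r`, a scope in `V^r`
and a relation on `D^r`. -/
abbrev Constraint (V D : Type*) := Σ r : ℕ, (Fin r → V) × Set (Fin r → D)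

/-- The scope of the constraint `C^{R*}_{f_i(t_1,…,t_{a_i})}` of `P^c_M(Γ)`:
its `k`-th variable is `x_{f_i(t_1[k],…,t_{a_i}[k])}`. -/
def indScope {D : Type*} (σ : MalcevSig) (R : Σ r : ℕ, Set (Fin r → D)) (i : Fin σ.m)
    (t : Fin (σ.arity i) → Fin R.1 → D) : Fin R.1 → MVar σ D :=
  fun k => ⟨i, fun l => t l k⟩

/-- The relation of the constraint `C^{R*}_{f_i(t_1,…,t_{a_i})}` once 1-minimality has been
enforced, the current variable domains being `Dom`: the tuples of `R*` lying componentwise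
in the current domains of the variables of the scope. -/
def restrictedRel {D : Type*} (σ : MalcevSig) (Dom : MVar σ D → Set D)
    (R : Σ r : ℕ, Set (Fin r → D)) (i : Fin σ.m) (t : Fin (σ.arity i) → Fin R.1 → D) :
    Set (Fin R.1 → D) :=
  {s | s ∈ R.2 ∧ ∀ k, s k ∈ Dom ⟨i, fun l => t l k⟩}

/-- A consistent restriction of `P^c_M(Γ)`: an instance obtained from `P^c_M(Γ)` by adding
unary or equality constraints and then enforcing 1-minimality.  It is described by the
current variable domains `Dom` and its set of constraints, which satisfy:
conservativity (`Dom x_{f_i(d_1,…)} ⊆ {d_1,…}`); each variable's domain is a unary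
constraint; every constraint `C^{R*}_{f_i(t_1,…)}` of `P^c_M(Γ)`, with its relation shrunk
to `R* ∩ Π_k Dom(S[k])`, is present; 1-minimality (each variable's domain equals the
projection of every constraint containing it); and every other constraint is unary or an
equality constraint. -/
structure ConsistentRestriction (σ : MalcevSig) (D : Type*) (Γ : Lang D) where
  Dom : MVar σ D → Set D
  constraints : Set (Constraint (MVar σ D) D)
  conservative : ∀ (i : Fin σ.m) (d : Fin (σ.arity i) → D), Dom ⟨i, d⟩ ⊆ Set.range d
  domConstraint : ∀ x : MVar σ D,
      (⟨1, fun _ => x, {s | s 0 ∈ Dom x}⟩ : Constraint (MVar σ D) D) ∈ constraints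
  relConstraint : ∀ R ∈ Γ, ∀ (i : Fin σ.m) (t : Fin (σ.arity i) → Fin R.1 → D),
      (∀ l, t l ∈ R.2) →
      (⟨R.1, indScope σ R i t, restrictedRel σ Dom R i t⟩ : Constraint (MVar σ D) D)
        ∈ constraints
  minimal : ∀ c ∈ constraints, ∀ k : Fin c.1, Dom (c.2.1 k) = (fun s => s k) '' c.2.2
  shape : ∀ c ∈ constraints,
      (∃ R, R ∈ Γ ∧ ∃ (i : Fin σ.m) (t : Fin (σ.arity i) → Fin R.1 → D), (∀ l, t l ∈ R.2) ∧
        c = ⟨R.1, indScope σ R i t, restrictedRel σ Dom R i t⟩)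
      ∨ c.1 = 1 ∨ (c.1 = 2 ∧ ∀ s ∈ c.2.2, ∀ p q : Fin c.1, s p = s q)

/-- `X₁ ◁ X₂`: for every operation symbol `f_i`, every variable `x ∈ X₂` and every tuple
`t ∈ D(x)^{a_i}`, the variable `x_{f_i(t)}` belongs to `X₁`. -/
def TriangleLeft {D : Type*} (σ : MalcevSig) {Γ : Lang D} (P : ConsistentRestriction σ D Γ)
    (X₁ X₂ : Set (MVar σ D)) : Prop :=
  ∀ (i : Fin σ.m), ∀ x ∈ X₂, ∀ t : Fin (σ.arity i) → D,
    (∀ l, t l ∈ P.Dom x) → (⟨i, t⟩ : MVar σ D) ∈ X₁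

/-- A set of variables is closed if `X ◁ X`. -/
def IsClosedSet {D : Type*} (σ : MalcevSig) {Γ : Lang D} (P : ConsistentRestriction σ D Γ)
    (X : Set (MVar σ D)) : Prop :=
  TriangleLeft σ P X X

/-- The singleton variables of `P^c_M(Γ)`: those of the form `x_{f_i(v,…,v)}` for `v ∈ D`. -/
def singletonVars (σ : MalcevSig) (D : Type*) : Set (MVar σ D) :=
  {x | ∃ v : D, ∀ l, x.2 l = v}

/-- `φ` is a solution of the projection of the instance onto the variable set `X`:
for every constraint, some tuple of its relation agrees with `φ` on all the positions of the
scope lying in `X`. -/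
def SolOn {V D : Type*} (Cs : Set (Constraint V D)) (X : Set V) (φ : V → D) : Prop :=
  ∀ c ∈ Cs, ∃ s ∈ c.2.2, ∀ k : Fin c.1, c.2.1 k ∈ X → φ (c.2.1 k) = s k

/-- Let `P` be a consistent restriction of `P^c_M(Γ)`, let `f_i, f_j` be
operation symbols of `M`, let `C^{R*}_{f_i(t_1,…,t_{a_i})}` be a constraint of `P` and let
`t'_1,…,t'_{a_j}` be tuples of its current relation.  Then
`R(C^{R*}_{f_j(t'_1,…,t'_{a_j})}) ⊆ R(C^{R*}_{f_i(t_1,…,t_{a_i})})`. -/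
theorem restrictedRel_subset {D : Type*} (σ : MalcevSig) (Γ : Lang D)
    (P : ConsistentRestriction σ D Γ)
    (R : Σ r : ℕ, Set (Fin r → D)) (hR : R ∈ Γ) (i j : Fin σ.m)
    (t : Fin (σ.arity i) → Fin R.1 → D) (ht : ∀ l, t l ∈ R.2)
    (t' : Fin (σ.arity j) → Fin R.1 → D)
    (ht' : ∀ l, t' l ∈ restrictedRel σ P.Dom R i t) :
    restrictedRel σ P.Dom R j t' ⊆ restrictedRel σ P.Dom R i t := by
  rintro s ⟨hsR, hdom⟩
  refine ⟨hsR, fun k => ?_⟩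
  obtain ⟨l, hl⟩ := P.conservative j (fun l => t' l k) (hdom k)
  exact hl ▸ (ht' l).2 k
end

section
/- Let P = (X, D, C) be a consistent restriction of P^c_M(Γ) and let X_1, X_2 ⊆ X satisfy X_1 ◁ X_2. Then every solution to the projected instance P|X_1 is a collection of polymorphisms of the constraint language of P|X_2. Concretely: let φ be a solution to P|X_1; then for every constraint C_2 = (S_2, R_2) of P|X_2, every operation symbol f_j of M (of arity a_j), and all tuples t^2_1,...,t^2_{a_j} ∈ R_2, the tuple whose k-th entry is φ(x_{f_j(t^2_1[k],...,t^2_{a_j}[k])}) belongs to R_2 (all these variables belong to X_1 by the hypothesis X_1 ◁ X_2 together with 1-minimality). -/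
/-- Let `P` be a consistent restriction of `P^c_M(Γ)` and `X₁ ◁ X₂`.
Then every solution `φ` of `P|X₁` is a collection of polymorphisms of the language of
`P|X₂`: for every constraint `C₂ = (S₂,R₂)` of `P|X₂` (i.e. the projection onto `X₂` of a
constraint `c` of `P`), every symbol `f_j` and all tuples `t²_1,…,t²_{a_j} ∈ R₂` (i.e.
projections of tuples `s 0, …, s (a_j - 1)` of the relation of `c`), the tuple whose `k`-th
entry is `φ(x_{f_j(t²_1[k],…,t²_{a_j}[k])})` belongs to `R₂`. -/
theorem solution_is_polymorphisms {D : Type*} (σ : MalcevSig) (Γ : Lang D)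
    (P : ConsistentRestriction σ D Γ) (X₁ X₂ : Set (MVar σ D))
    (hX : TriangleLeft σ P X₁ X₂)
    (φ : MVar σ D → D) (hφ : SolOn P.constraints X₁ φ) :
    ∀ c ∈ P.constraints, ∀ (j : Fin σ.m) (s : Fin (σ.arity j) → Fin c.1 → D),
      (∀ l, s l ∈ c.2.2) →
      ∃ u ∈ c.2.2, ∀ k : Fin c.1, c.2.1 k ∈ X₂ → u k = φ ⟨j, fun l => s l k⟩ := by
  intro c hc j s hs
  have hdomφ : ∀ y ∈ X₁, φ y ∈ P.Dom y := by
    intro y hy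
    obtain ⟨s', hs', hmatch⟩ := hφ _ (P.domConstraint y)
    have h0 := hmatch 0 hy
    rw [h0]; exact hs'
  rcases P.shape c hc with ⟨R, hR, i, t, ht, hceq⟩ | hsh
  · subst hceq
    obtain ⟨u, hu, hmatch⟩ := hφ _ (P.relConstraint R hR j (fun l => s l) (fun l => (hs l).1))
    refine ⟨u, ⟨hu.1, ?_⟩, ?_⟩
    · intro k
      obtain ⟨l₀, hl₀⟩ := P.conservative j (fun l => s l k) (hu.2 k)
      simp only at hl₀
      rw [← hl₀]
      exact (hs l₀).2 k
    · intro k hk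
      have hmem : (⟨j, fun l => s l k⟩ : MVar σ D) ∈ X₁ :=
        hX j _ hk (fun l => s l k) (fun l => (hs l).2 k)
      exact (hmatch k hmem).symm
  · have hconst : ∀ v ∈ c.2.2, ∀ p q : Fin c.1, v p = v q := by
      rcases hsh with h1 | ⟨h2, heq⟩
      · intro v _ p q
        have hp := p.isLt
        have hq := q.isLt
        have : p = q := Fin.ext (by omega)
        rw [this]
      · exact heq
    by_cases hk : ∃ k₀ : Fin c.1, c.2.1 k₀ ∈ X₂
    · obtain ⟨k₀, hk₀⟩ := hk
      have hsk : ∀ l, s l k₀ ∈ P.Dom (c.2.1 k₀) := by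
        intro l
        rw [P.minimal c hc k₀]
        exact ⟨s l, hs l, rfl⟩
      have hy₀ : (⟨j, fun l => s l k₀⟩ : MVar σ D) ∈ X₁ := hX j _ hk₀ _ hsk
      have hφy := hdomφ _ hy₀
      obtain ⟨l₀, hl₀⟩ := P.conservative j (fun l => s l k₀) hφy
      simp only at hl₀
      refine ⟨s l₀, hs l₀, ?_⟩
      intro k hk2
      have hyeq : (⟨j, fun l => s l k⟩ : MVar σ D) = ⟨j, fun l => s l k₀⟩ := by
        congr 1
        funext l
        exact hconst (s l) (hs l) k k₀
      rw [hyeq, ← hl₀, hconst (s l₀) (hs l₀) k k₀]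
    · obtain ⟨v, hv, _⟩ := hφ c hc
      exact ⟨v, hv, fun k hk2 => absurd ⟨k, hk2⟩ hk⟩
end

section
/- Let P^c_M(Γ) = (X, D, C) be the instance after enforcing 1-minimality, let a denote the maximum arity of the operation symbols of M and m their number. Then there exists a chain of subsets X_0 ⊆ X_1 ⊆ ... ⊆ X_α = X such that X_0 is the set of all singleton variables (the variables of the form x_{f_j(v,...,v)} for v ∈ D), every X_i is closed (X_i ◁ X_i), and |X_{i+1} \ X_i| ≤ m·a^a for every i. -/
section Aux

variable {D : Type*} [Fintype D]

/-- The orbit of a variable `x`: all variables whose tuple takes values in the range of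
the tuple of `x`. -/
def orbitOf (σ : MalcevSig) (x : MVar σ D) : Set (MVar σ D) :=
  {y | ∀ l, y.2 l ∈ Set.range x.2}

lemma card_orbitOf_le (σ : MalcevSig) (x : MVar σ D) :
    (orbitOf σ x).ncard ≤
      σ.m * (Finset.univ.sup σ.arity) ^ (Finset.univ.sup σ.arity) := by
  classical
  set a := Finset.univ.sup σ.arity with ha
  rw [← Nat.card_coe_set_eq]
  by_cases hR : Nonempty (Set.range x.2)
  · obtain ⟨r0⟩ := hR
    have hf : Function.Injective (fun y : orbitOf σ x => ((y.1.1 : Fin σ.m),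
        fun l : Fin a => if h : (l : ℕ) < σ.arity y.1.1 then
          (⟨y.1.2 ⟨(l : ℕ), h⟩, y.2 ⟨(l : ℕ), h⟩⟩ : Set.range x.2) else r0)) := by
      rintro ⟨⟨i, d⟩, hd⟩ ⟨⟨j, e⟩, he⟩ heq
      simp only [Prod.mk.injEq] at heq
      obtain ⟨h1, h2⟩ := heq
      subst h1
      have hde : d = e := by
        funext l
        have hl : (l : ℕ) < a := lt_of_lt_of_le l.isLt (Finset.le_sup (Finset.mem_univ i))
        have h3 := congrFun h2 ⟨(l : ℕ), hl⟩
        rw [dif_pos (show ((⟨(l : ℕ), hl⟩ : Fin a) : ℕ) < σ.arity i from l.isLt),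
          dif_pos (show ((⟨(l : ℕ), hl⟩ : Fin a) : ℕ) < σ.arity i from l.isLt)] at h3
        have := Subtype.ext_iff.mp h3
        simpa using this
      subst hde
      rfl
    have hle := Nat.card_le_card_of_injective _ hf
    rw [Nat.card_prod, Nat.card_fun, Nat.card_eq_fintype_card (α := Fin σ.m),
      Nat.card_eq_fintype_card (α := Fin a), Fintype.card_fin, Fintype.card_fin] at hle
    refine hle.trans (Nat.mul_le_mul_left _ (Nat.pow_le_pow_left ?_ _))
    have h1 : Nat.card (Set.range x.2) ≤ Nat.card (Fin (σ.arity x.1)) :=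
      Finite.card_range_le x.2
    have h2 : Nat.card (Fin (σ.arity x.1)) = σ.arity x.1 := by
      rw [Nat.card_eq_fintype_card, Fintype.card_fin]
    rw [h2] at h1
    exact h1.trans (Finset.le_sup (Finset.mem_univ x.1))
  · have hf : Function.Injective (fun y : orbitOf σ x => y.1.1) := by
      rintro ⟨⟨i, d⟩, hd⟩ ⟨⟨j, e⟩, he⟩ heq
      dsimp only at heq
      subst heq
      have hde : d = e := by
        funext l
        exact absurd ⟨⟨d l, hd l⟩⟩ hR
      subst hde
      rfl
    have hle := Nat.card_le_card_of_injective _ hf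
    rw [Nat.card_eq_fintype_card (α := Fin σ.m), Fintype.card_fin] at hle
    have hpos : 0 < a ^ a := by
      rcases Nat.eq_zero_or_pos a with h | h
      · simp [h]
      · exact pow_pos h a
    exact hle.trans (Nat.le_mul_of_pos_right _ hpos)

end Aux

set_option maxHeartbeats 1000000

/-- In `P^c_M(Γ)` after enforcing 1-minimality there is a chain of subsets
of variables `X_0 ⊆ X_1 ⊆ … ⊆ X_α = X` such that `X_0` is the set of singleton variables,
every `X_i` is closed, and `|X_{i+1} \ X_i| ≤ m·a^a` where `a` is the maximum arity of the
operation symbols of `M` and `m` their number. -/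
theorem exists_closed_chain {D : Type*} [Fintype D] (σ : MalcevSig) (Γ : Lang D)
    (hΓ : Γ.Finite) (P : ConsistentRestriction σ D Γ) :
    ∃ (α : ℕ) (X : ℕ → Set (MVar σ D)),
      X 0 = singletonVars σ D ∧
      X α = Set.univ ∧
      (∀ i, X i ⊆ X (i + 1)) ∧
      (∀ i, IsClosedSet σ P (X i)) ∧
      (∀ i, (X (i + 1) \ X i).ncard ≤
        σ.m * (Finset.univ.sup σ.arity) ^ (Finset.univ.sup σ.arity)) := by
  classical
  set N := Fintype.card (MVar σ D) with hN
  set e := (Fintype.equivFin (MVar σ D)).symm with he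
  set X : ℕ → Set (MVar σ D) := fun n =>
    singletonVars σ D ∪ ⋃ (k : Fin N) (_ : (k : ℕ) < n), orbitOf σ (e k) with hX
  have hXmem : ∀ (n : ℕ) (y : MVar σ D), y ∈ X n ↔
      (y ∈ singletonVars σ D ∨ ∃ k : Fin N, (k : ℕ) < n ∧ y ∈ orbitOf σ (e k)) := by
    intro n y
    simp only [hX, Set.mem_union, Set.mem_iUnion, exists_prop]
  have hmono : ∀ n, X n ⊆ X (n + 1) := by
    intro n y hy
    rw [hXmem] at hy ⊢
    rcases hy with h | ⟨k, hk, hyk⟩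
    · exact Or.inl h
    · exact Or.inr ⟨k, Nat.lt_succ_of_lt hk, hyk⟩
  have hcons : ∀ y : MVar σ D, P.Dom y ⊆ Set.range y.2 := by
    intro y
    exact P.conservative y.1 y.2
  refine ⟨N, X, ?_, ?_, hmono, ?_, ?_⟩
  · apply Set.eq_of_subset_of_subset
    · intro y hy
      rcases (hXmem 0 y).mp hy with h | ⟨k, hk, _⟩
      · exact h
      · exact absurd hk (Nat.not_lt_zero _)
    · intro y hy
      exact (hXmem 0 y).mpr (Or.inl hy)
  · apply Set.eq_univ_of_forall
    intro y
    refine (hXmem N y).mpr (Or.inr ⟨e.symm y, (e.symm y).isLt, fun l => ?_⟩)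
    rw [e.apply_symm_apply]
    exact ⟨l, rfl⟩
  · intro n i0 y hy t ht
    rcases (hXmem n y).mp hy with ⟨v, hv⟩ | ⟨k, hk, hyk⟩
    · refine (hXmem n _).mpr (Or.inl ⟨v, fun l => ?_⟩)
      obtain ⟨l', hl'⟩ := hcons y (ht l)
      show t l = v
      rw [← hl']
      exact hv l'
    · refine (hXmem n _).mpr (Or.inr ⟨k, hk, fun l => ?_⟩)
      obtain ⟨l', hl'⟩ := hcons y (ht l)
      show t l ∈ Set.range (e k).2
      rw [← hl']
      exact hyk l'
  · intro n
    by_cases hn : n < N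
    · have hsub : X (n + 1) \ X n ⊆ orbitOf σ (e ⟨n, hn⟩) := by
        rintro y ⟨hy1, hy2⟩
        rcases (hXmem (n + 1) y).mp hy1 with h | ⟨k, hk, hyk⟩
        · exact absurd ((hXmem n y).mpr (Or.inl h)) hy2
        · rcases Nat.lt_succ_iff_lt_or_eq.mp hk with hk' | hk'
          · exact absurd ((hXmem n y).mpr (Or.inr ⟨k, hk', hyk⟩)) hy2
          · have hkk : k = ⟨n, hn⟩ := Fin.ext hk'
            rwa [hkk] at hyk
      calc (X (n + 1) \ X n).ncard ≤ (orbitOf σ (e ⟨n, hn⟩)).ncard :=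
            Set.ncard_le_ncard hsub (Set.toFinite _)
        _ ≤ _ := card_orbitOf_le σ _
    · have hsub : X (n + 1) ⊆ X n := by
        intro y hy
        rcases (hXmem (n + 1) y).mp hy with h | ⟨k, _, hyk⟩
        · exact (hXmem n y).mpr (Or.inl h)
        · exact (hXmem n y).mpr
            (Or.inr ⟨k, lt_of_lt_of_le k.isLt (le_of_not_gt hn), hyk⟩)
      rw [Set.diff_eq_empty.mpr hsub]
      simp
end

section
/- Let P be a consistent restriction of P^c_M(Γ), let X_i be a set of variables that is closed in P and contains all singleton variables, and let Y ⊇ X_i be a set of variables such that every variable in Y \ X_i has a singleton domain in P. Then X_i ◁ Y in P. Consequently, every solution to P|X_i is a collection of polymorphisms of the constraint language of P|Y. -/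
/-- Let `P` be a consistent restriction of `P^c_M(Γ)`, let `X_i` be a closed
set of variables containing all singleton variables, and let `Y ⊇ X_i` be such that every
variable of `Y \ X_i` has a singleton domain in `P`.  Then `X_i ◁ Y`, and consequently every
solution of `P|X_i` is a collection of polymorphisms of the language of `P|Y`. -/
theorem triangle_of_singleton_domains {D : Type*} (σ : MalcevSig) (Γ : Lang D)
    (P : ConsistentRestriction σ D Γ) (Xi Y : Set (MVar σ D))
    (hclosed : IsClosedSet σ P Xi)
    (hsing : singletonVars σ D ⊆ Xi)
    (hXY : Xi ⊆ Y)
    (hdom : ∀ x ∈ Y \ Xi, ∃ v : D, P.Dom x = {v}) :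
    TriangleLeft σ P Xi Y ∧
    (∀ φ : MVar σ D → D, SolOn P.constraints Xi φ →
      ∀ c ∈ P.constraints, ∀ (j : Fin σ.m) (s : Fin (σ.arity j) → Fin c.1 → D),
        (∀ l, s l ∈ c.2.2) →
        ∃ u ∈ c.2.2, ∀ k : Fin c.1, c.2.1 k ∈ Y → u k = φ ⟨j, fun l => s l k⟩) := by
  have part1 : TriangleLeft σ P Xi Y := by
    intro i x hx t ht
    by_cases hxi : x ∈ Xi
    · exact hclosed i x hxi t ht
    · obtain ⟨v, hv⟩ := hdom x ⟨hx, hxi⟩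
      refine hsing ⟨v, fun l => ?_⟩
      have := ht l
      rw [hv] at this
      exact this
  refine ⟨part1, ?_⟩
  intro φ hφ c hc j s hs
  -- φ restricted to Xi takes values in the domains
  have hmem : ∀ y ∈ Xi, φ y ∈ P.Dom y := by
    intro y hy
    obtain ⟨s', hs', hag⟩ := hφ _ (P.domConstraint y)
    have h := hag 0 hy
    exact h ▸ hs'
  -- the arity of f_j is positive
  have hj : Nonempty (Fin (σ.arity j)) := by
    by_contra h
    have h0 : IsEmpty (Fin (σ.arity j)) := not_nonempty_iff.mp h
    obtain ⟨s', hs', -⟩ := hφ _ (P.domConstraint ⟨j, fun l => h0.elim l⟩)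
    obtain ⟨l, -⟩ := P.conservative j _ hs'
    exact h0.elim l
  rcases P.shape c hc with ⟨R, hR, i, t, ht, rfl⟩ | h1 | ⟨h2, heq⟩
  · -- relational constraint
    obtain ⟨u, hu, hag⟩ := hφ _ (P.relConstraint R hR j s (fun l => (hs l).1))
    refine ⟨u, ⟨hu.1, fun k => ?_⟩, fun k hk => ?_⟩
    · obtain ⟨l₀, hl₀⟩ := P.conservative j (fun l => s l k) (hu.2 k)
      have : s l₀ k = u k := hl₀
      rw [← this]
      exact (hs l₀).2 k
    · have hy : (⟨j, fun l => s l k⟩ : MVar σ D) ∈ Xi :=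
        part1 j (indScope σ R i t k) hk (fun l => s l k) (fun l => (hs l).2 k)
      exact (hag k hy).symm
  · -- unary constraint
    have hsub : Subsingleton (Fin c.1) := by rw [h1]; infer_instance
    have hconst : ∀ (l : Fin (σ.arity j)) (p q : Fin c.1), s l p = s l q := by
      intro l p q; rw [Subsingleton.elim p q]
    by_cases hex : ∃ k, c.2.1 k ∈ Y
    · obtain ⟨k₀, hk₀⟩ := hex
      have hmemk : ∀ l, s l k₀ ∈ P.Dom (c.2.1 k₀) := fun l => by
        rw [P.minimal c hc k₀]; exact ⟨s l, hs l, rfl⟩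
      have hy : (⟨j, fun l => s l k₀⟩ : MVar σ D) ∈ Xi :=
        part1 j _ hk₀ _ hmemk
      obtain ⟨l₀, hl₀⟩ := P.conservative j _ (hmem _ hy)
      refine ⟨s l₀, hs l₀, fun k hk => ?_⟩
      have hyk : (⟨j, fun l => s l k⟩ : MVar σ D) = ⟨j, fun l => s l k₀⟩ := by
        congr 1; funext l; exact hconst l k k₀
      rw [hyk]
      exact (hconst l₀ k k₀).trans hl₀
    · obtain ⟨w, hw, -⟩ := hφ c hc
      exact ⟨w, hw, fun k hk => absurd ⟨k, hk⟩ hex⟩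
  · -- equality constraint
    have hconst : ∀ (l : Fin (σ.arity j)) (p q : Fin c.1), s l p = s l q :=
      fun l p q => heq (s l) (hs l) p q
    by_cases hex : ∃ k, c.2.1 k ∈ Y
    · obtain ⟨k₀, hk₀⟩ := hex
      have hmemk : ∀ l, s l k₀ ∈ P.Dom (c.2.1 k₀) := fun l => by
        rw [P.minimal c hc k₀]; exact ⟨s l, hs l, rfl⟩
      have hy : (⟨j, fun l => s l k₀⟩ : MVar σ D) ∈ Xi :=
        part1 j _ hk₀ _ hmemk
      obtain ⟨l₀, hl₀⟩ := P.conservative j _ (hmem _ hy)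
      refine ⟨s l₀, hs l₀, fun k hk => ?_⟩
      have hyk : (⟨j, fun l => s l k⟩ : MVar σ D) = ⟨j, fun l => s l k₀⟩ := by
        congr 1; funext l; exact hconst l k k₀
      rw [hyk]
      exact (hconst l₀ k k₀).trans hl₀
    · obtain ⟨w, hw, -⟩ := hφ c hc
      exact ⟨w, hw, fun k hk => absurd ⟨k, hk⟩ hex⟩
end

section
/- Let P = (X, D, C) be a 1-minimal CSP instance such that |D(x)| ≤ 2 for every variable x. Let f be a conservative binary polymorphism of the constraint language of P and let (V_1, V_2) be a partition of X such that: for every x ∈ V_1 with D(x) = {a,b}, f(a,b) = f(b,a) (write f(D(x)) for this common value, with f(D(x)) = v when D(x) = {v}); and for every x ∈ V_2, f(u,v) = u for all u,v ∈ D(x). Then: (i) for every constraint (S,R) of P and every tuple t ∈ R, the tuple t' defined by t'[k] = t[k] if S[k] ∈ V_2 and t'[k] = f(D(S[k])) if S[k] ∈ V_1 also belongs to R; (ii) consequently, if φ is a solution of P then the map φ' with φ'(x) = φ(x) for x ∈ V_2 and φ'(x) = f(D(x)) for x ∈ V_1 is also a solution, so every variable x ∈ V_1 can be assigned f(D(x))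 without altering the satisfiability of P. -/
/-- A 1-minimal CSP instance: each variable `x` has an individual domain `Dom x`
(represented by a unary constraint), and the domain of each variable equals the projection
onto it of every constraint whose scope contains it. -/
structure CSPInstance (V D : Type*) where
  Dom : V → Set D
  constraints : Set (Constraint V D)
  domConstraint : ∀ x : V, (⟨1, fun _ => x, {s | s 0 ∈ Dom x}⟩ : Constraint V D) ∈ constraints
  minimal : ∀ c ∈ constraints, ∀ k : Fin c.1, Dom (c.2.1 k) = (fun s => s k) '' c.2.2

/-- `φ` is a solution of the instance. -/
def IsSolution {V D : Type*} (P : CSPInstance V D) (φ : V → D) : Prop :=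
  ∀ c ∈ P.constraints, (fun k => φ (c.2.1 k)) ∈ c.2.2

/-- `f` is a (binary) polymorphism of the constraint language of the instance. -/
def IsPolyOfInstance {V D : Type*} (P : CSPInstance V D) (f : D → D → D) : Prop :=
  ∀ c ∈ P.constraints, ∀ t t' : Fin c.1 → D, t ∈ c.2.2 → t' ∈ c.2.2 →
    (fun k => f (t k) (t' k)) ∈ c.2.2

/-- Let `P` be a 1-minimal instance with all domains of size at most 2, `f`
a conservative binary polymorphism of its language, and `(V₁,V₂)` a partition of the
variables such that `f` is commutative on `D(x)` for `x ∈ V₁` (with common value `g x`, so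
that `g x = f v v = v` when `D(x) = {v}`) and `f` projects onto its first argument on `D(x)`
for `x ∈ V₂`.  Then (i) every tuple `t` of a constraint relation can be replaced by a tuple
of the same relation taking the value `g (S k)` at every position `k` with `S k ∈ V₁` and
agreeing with `t` at every position with `S k ∈ V₂`; and (ii) consequently, modifying any
solution `φ` so that it takes the value `g x` on every `x ∈ V₁` again yields a solution, so
each `x ∈ V₁` can be assigned `g x` without altering satisfiability. -/
theorem assign_commutative_values {V D : Type*} [Fintype V] [Fintype D]
    (P : CSPInstance V D)
    (hdom : ∀ x : V, (P.Dom x).ncard ≤ 2)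
    (f : D → D → D)
    (hf : IsPolyOfInstance P f)
    (hcons : ∀ u v : D, f u v = u ∨ f u v = v)
    (V₁ V₂ : Set V) (hcover : V₁ ∪ V₂ = Set.univ) (hdisj : Disjoint V₁ V₂)
    (g : V → D)
    (hg : ∀ x ∈ V₁, ∀ a b : D, P.Dom x = {a, b} → g x = f a b ∧ g x = f b a)
    (hV₂ : ∀ x ∈ V₂, ∀ u ∈ P.Dom x, ∀ v ∈ P.Dom x, f u v = u) :
    (∀ c ∈ P.constraints, ∀ t ∈ c.2.2, ∃ t' ∈ c.2.2,
        (∀ k : Fin c.1, c.2.1 k ∈ V₂ → t' k = t k) ∧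
        (∀ k : Fin c.1, c.2.1 k ∈ V₁ → t' k = g (c.2.1 k))) ∧
    (∀ φ : V → D, IsSolution P φ → ∀ φ' : V → D,
        (∀ x ∈ V₂, φ' x = φ x) → (∀ x ∈ V₁, φ' x = g x) → IsSolution P φ') := by
  classical
  have hself : ∀ u : D, f u u = u := fun u => (hcons u u).elim id id
  have hgpair : ∀ x ∈ V₁, ∀ u ∈ P.Dom x,
      ∃ a b : D, P.Dom x = {a, b} ∧ g x = f a b ∧ g x = f b a := by
    intro x hx u hu
    have hpos : 0 < (P.Dom x).ncard :=
      (Set.ncard_pos (Set.toFinite _)).mpr ⟨u, hu⟩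
    have hle := hdom x
    have hcases : (P.Dom x).ncard = 1 ∨ (P.Dom x).ncard = 2 := by omega
    rcases hcases with h1 | h2
    · obtain ⟨a, ha⟩ := Set.ncard_eq_one.mp h1
      have hpair : P.Dom x = {a, a} := by rw [ha, Set.pair_eq_singleton]
      exact ⟨a, a, hpair, hg x hx a a hpair⟩
    · obtain ⟨a, b, -, hab⟩ := Set.ncard_eq_two.mp h2
      exact ⟨a, b, hab, hg x hx a b hab⟩
  have hgabs : ∀ x ∈ V₁, ∀ u ∈ P.Dom x, ∀ v ∈ P.Dom x,
      (u = g x ∨ v = g x) → f u v = g x := by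
    intro x hx u hu v hv huv
    obtain ⟨a, b, hD, h1, h2⟩ := hgpair x hx u hu
    rw [hD] at hu hv
    simp only [Set.mem_insert_iff, Set.mem_singleton_iff] at hu hv
    rcases hu with rfl | rfl <;> rcases hv with rfl | rfl
    · rw [hself]; exact huv.elim Eq.symm Eq.symm |>.symm
    · exact h1.symm
    · exact h2.symm
    · rw [hself]; exact huv.elim Eq.symm Eq.symm |>.symm
  have hgmem : ∀ x ∈ V₁, ∀ u ∈ P.Dom x, g x ∈ P.Dom x := by
    intro x hx u hu
    obtain ⟨a, b, hD, h1, h2⟩ := hgpair x hx u hu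
    rw [hD, h1]
    rcases hcons a b with h | h <;> simp [h]
  have key : ∀ c ∈ P.constraints, ∀ t ∈ c.2.2, ∃ t' ∈ c.2.2,
      (∀ k, c.2.1 k ∉ V₁ → t' k = t k) ∧ (∀ k, c.2.1 k ∈ V₁ → t' k = g (c.2.1 k)) := by
    intro c hc
    have hmem : ∀ t ∈ c.2.2, ∀ k, t k ∈ P.Dom (c.2.1 k) := fun t ht k => by
      rw [P.minimal c hc k]; exact ⟨t, ht, rfl⟩
    suffices H : ∀ n : ℕ, ∀ t ∈ c.2.2,
        (Finset.univ.filter (fun k => c.2.1 k ∈ V₁ ∧ t k ≠ g (c.2.1 k))).card ≤ n →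
        ∃ t' ∈ c.2.2, (∀ k, c.2.1 k ∉ V₁ → t' k = t k) ∧
          (∀ k, c.2.1 k ∈ V₁ → t' k = g (c.2.1 k)) by
      intro t ht
      exact H _ t ht le_rfl
    intro n
    induction n with
    | zero =>
      intro t ht hcard
      refine ⟨t, ht, fun _ _ => rfl, fun k hk => ?_⟩
      by_contra hne
      have hkmem : k ∈ Finset.univ.filter (fun k => c.2.1 k ∈ V₁ ∧ t k ≠ g (c.2.1 k)) :=
        Finset.mem_filter.mpr ⟨Finset.mem_univ _, hk, hne⟩
      have := Finset.card_pos.mpr ⟨k, hkmem⟩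
      omega
    | succ n ih =>
      intro t ht hcard
      by_cases hB : ∃ k₀, c.2.1 k₀ ∈ V₁ ∧ t k₀ ≠ g (c.2.1 k₀)
      · obtain ⟨k₀, hk₀, hne₀⟩ := hB
        have hgd : g (c.2.1 k₀) ∈ P.Dom (c.2.1 k₀) := hgmem _ hk₀ _ (hmem t ht k₀)
        rw [P.minimal c hc k₀] at hgd
        obtain ⟨s, hs, hsk₀⟩ := hgd
        have ht₁ : (fun k => f (t k) (s k)) ∈ c.2.2 := hf c hc t s ht hs
        set t₁ : Fin c.1 → D := fun k => f (t k) (s k) with ht₁def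
        have hsub : Finset.univ.filter (fun k => c.2.1 k ∈ V₁ ∧ t₁ k ≠ g (c.2.1 k)) ⊆
            (Finset.univ.filter (fun k => c.2.1 k ∈ V₁ ∧ t k ≠ g (c.2.1 k))).erase k₀ := by
          intro k hk
          rw [Finset.mem_filter] at hk
          obtain ⟨-, hk1, hkne⟩ := hk
          have hne : t k ≠ g (c.2.1 k) := by
            intro h
            exact hkne (hgabs _ hk1 _ (hmem t ht k) _ (hmem s hs k) (Or.inl h))
          refine Finset.mem_erase.mpr ⟨?_, Finset.mem_filter.mpr ⟨Finset.mem_univ k, hk1, hne⟩⟩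
          rintro rfl
          exact hkne (hgabs _ hk₀ _ (hmem t ht k) _ (hmem s hs k) (Or.inr hsk₀))
        have hcard₁ :
            (Finset.univ.filter (fun k => c.2.1 k ∈ V₁ ∧ t₁ k ≠ g (c.2.1 k))).card ≤ n := by
          have hk₀mem : k₀ ∈ Finset.univ.filter (fun k => c.2.1 k ∈ V₁ ∧ t k ≠ g (c.2.1 k)) :=
            Finset.mem_filter.mpr ⟨Finset.mem_univ _, hk₀, hne₀⟩
          have h1 := Finset.card_le_card hsub
          have h2 := Finset.card_erase_of_mem hk₀mem
          omega
        obtain ⟨t', ht', h2, h1⟩ := ih t₁ ht₁ hcard₁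
        refine ⟨t', ht', fun k hk => ?_, h1⟩
        rw [h2 k hk]
        have hk2 : c.2.1 k ∈ V₂ := by
          have hu : c.2.1 k ∈ V₁ ∪ V₂ := by rw [hcover]; exact Set.mem_univ _
          rcases hu with h | h
          · exact absurd h hk
          · exact h
        exact hV₂ _ hk2 _ (hmem t ht k) _ (hmem s hs k)
      · push_neg at hB
        exact ⟨t, ht, fun _ _ => rfl, fun k hk => hB k hk⟩
  constructor
  · intro c hc t ht
    obtain ⟨t', ht', h2, h1⟩ := key c hc t ht
    exact ⟨t', ht', fun k hk => h2 k (Set.disjoint_right.mp hdisj hk), h1⟩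
  · intro φ hφ φ' h2 h1 c hc
    obtain ⟨t', ht', ht2, ht1⟩ := key c hc (fun k => φ (c.2.1 k)) (hφ c hc)
    have heq : (fun k => φ' (c.2.1 k)) = t' := by
      funext k
      have hu : c.2.1 k ∈ V₁ ∪ V₂ := by rw [hcover]; exact Set.mem_univ _
      rcases hu with h | h
      · rw [h1 _ h, ht1 k h]
      · rw [h2 _ h, ht2 k (Set.disjoint_right.mp hdisj h)]
    exact heq ▸ ht'
end

section
/- Let k ≥ 2, let D be a set and let e : D^{k+1} → D be a conservative k-edge operation. Define d(x,y) = e(x,y,x,x,...,x), p(x,y,z) = e(y,d(y,z),x,x,...,x), and s(x_1,...,x_k) = e(x_2,x_1,x_2,x_3,...,x_k). Then for all x,y ∈ D: p(x,y,y) = x; p(x,x,y) = d(x,y); d(x,d(x,y)) = d(x,y); s(x,y,y,...,y) = d(y,x); and s(y,x,y,...,y) = y. -/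
/-- Let `k ≥ 2` and let `e` be a conservative `k`-edge operation on `D`
(arguments indexed by `Fin (k+1)`, so the paper's positions `1,…,k+1` are `0,…,k` here).
Define `d(x,y) = e(x,y,x,…,x)`, `p(x,y,z) = e(y,d(y,z),x,…,x)` and
`s(x_1,…,x_k) = e(x_2,x_1,x_2,x_3,…,x_k)`.  Then `p(x,y,y) = x`, `p(x,x,y) = d(x,y)`,
`d(x,d(x,y)) = d(x,y)`, `s(x,y,…,y) = d(y,x)` and `s(y,x,y,…,y) = y`. -/
theorem edge_derived_operations {D : Type*} (k : ℕ) (hk : 2 ≤ k)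
    (e : (Fin (k + 1) → D) → D)
    (hcons : ∀ t : Fin (k + 1) → D, e t ∈ Set.range t)
    (hedge1 : ∀ x y : D, e (fun q => if q.val ≤ 1 then x else y) = y)
    (hedge2 : ∀ x y : D, ∀ i : Fin (k + 1), 2 ≤ i.val →
        e (fun q => if q.val = 0 ∨ q.val = i.val then x else y) = y) :
    let d : D → D → D := fun x y => e (fun q => if q.val = 1 then y else x)
    let p : D → D → D → D := fun x y z =>
      e (fun q => if q.val = 0 then y else if q.val = 1 then d y z else x)
    let s : (Fin k → D) → D := fun t =>
      e (fun q => if q.val = 0 then t ⟨1, by omega⟩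
          else if q.val = 1 then t ⟨0, by omega⟩
          else t ⟨q.val - 1, by have := q.isLt; omega⟩)
    ∀ x y : D,
      p x y y = x ∧
      p x x y = d x y ∧
      d x (d x y) = d x y ∧
      s (fun i => if i.val = 0 then x else y) = d y x ∧
      s (fun i => if i.val = 1 then x else y) = y := by
  intro d p s x y
  have idem : ∀ z : D, e (fun _ => z) = z := by
    intro z
    have := hedge1 z z
    simpa using this
  have hdd : ∀ z : D, d z z = z := by
    intro z
    show e _ = z
    have : (fun q : Fin (k+1) => if q.val = 1 then z else z) = fun _ => z := by
      funext q; simp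
    rw [this, idem]
  have h3 : d x (d x y) = d x y := by
    obtain ⟨i, hi⟩ := hcons (fun q => if q.val = 1 then y else x)
    have hd : d x y = if i.val = 1 then y else x := hi.symm
    by_cases h : i.val = 1
    · have hxy : d x y = y := hd.trans (if_pos h)
      rw [hxy]; exact hxy
    · have hxy : d x y = x := hd.trans (if_neg h)
      rw [hxy]; exact hdd x
  refine ⟨?_, ?_, h3, ?_, ?_⟩
  · -- p x y y = x
    show e _ = x
    have hy : d y y = y := hdd y
    have : (fun q : Fin (k+1) => if q.val = 0 then y else if q.val = 1 then d y y else x)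
        = fun q => if q.val ≤ 1 then y else x := by
      funext q
      rcases Nat.lt_or_ge q.val 2 with h | h
      · interval_cases h' : q.val <;> simp_all
      · have h0 : ¬ q.val = 0 := by omega
        have h1 : ¬ q.val = 1 := by omega
        have h2 : ¬ q.val ≤ 1 := by omega
        simp [h0, h1, h2]
    rw [this, hedge1]
  · -- p x x y = d x y
    show e _ = d x y
    have : (fun q : Fin (k+1) => if q.val = 0 then x else if q.val = 1 then d x y else x)
        = fun q => if q.val = 1 then d x y else x := by
      funext q
      by_cases h0 : q.val = 0
      · have h1 : ¬ q.val = 1 := by omega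
        simp [h0, h1]
      · simp [h0]
    rw [this]
    exact h3
  · -- s (x,y,...,y) = d y x
    show e _ = e _
    congr 1
    funext q
    by_cases h0 : q.val = 0
    · have h1 : ¬ q.val = 1 := by omega
      simp [h0, h1]
    · by_cases h1 : q.val = 1
      · simp [h0, h1]
      · have h2 : ¬ q.val - 1 = 0 := by omega
        simp [h0, h1, h2]
  · -- s (y,x,y,...,y) = y
    show e _ = y
    have : (fun q : Fin (k+1) =>
        if q.val = 0 then (if (1:ℕ) = 1 then x else y)
        else if q.val = 1 then (if (0:ℕ) = 1 then x else y)
        else if q.val - 1 = 1 then x else y)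
        = fun q => if q.val = 0 ∨ q.val = 2 then x else y := by
      funext q
      by_cases h0 : q.val = 0
      · simp [h0]
      · by_cases h1 : q.val = 1
        · simp [h0, h1]
        · by_cases h2 : q.val = 2
          · have : q.val - 1 = 1 := by omega
            simp [h0, h1, h2, this]
          · have : ¬ q.val - 1 = 1 := by omega
            simp [h0, h1, h2, this]
    rw [show (fun q : Fin (k+1) =>
        if q.val = 0 then (if (1:ℕ) = 1 then x else y)
        else if q.val = 1 then (if (0:ℕ) = 1 then x else y)
        else if q.val - 1 = 1 then x else y) = _ from this]
    exact hedge2 x y ⟨2, by omega⟩ (by simp)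
end

section
/- Let D be a finite set and let g, h : D³ → D be conservative operations such that for every 2-element subset B ⊆ D, either (g restricted to B is a majority operation and h(x,y,z) = x for all x,y,z ∈ B) or (g(x,y,z) = x for all x,y,z ∈ B and h restricted to B is a minority operation). Define m(x,y,z) = h(g(x,y,z), g(y,z,x), g(z,x,y)). Then m is conservative and for every 2-element subset B ⊆ D, the restriction of m to B is either a majority operation or a minority operation. Moreover, if g and h are polymorphisms of a constraint language Γ on D, then so is m. -/
/-- Let `g, h` be conservative ternary operations on a finite set `D` such
that on every 2-element subset `B`, either `g` is a majority operation and `h` is the first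
projection, or `g` is the first projection and `h` is a minority operation.  Then
`m(x,y,z) = h(g(x,y,z), g(y,z,x), g(z,x,y))` is conservative and is a majority or a minority
operation on every 2-element subset (a GMM behaviour); moreover if `g` and `h` are
polymorphisms of a constraint language `Γ` then so is `m`. -/
theorem gmm_composition {D : Type*} [Fintype D] (g h : D → D → D → D)
    (hgc : Cons3 g) (hhc : Cons3 h)
    (hB : ∀ a b : D, a ≠ b →
      (MajorityOn g {a, b} ∧
        ∀ x ∈ ({a, b} : Set D), ∀ y ∈ ({a, b} : Set D), ∀ z ∈ ({a, b} : Set D),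
          h x y z = x) ∨
      ((∀ x ∈ ({a, b} : Set D), ∀ y ∈ ({a, b} : Set D), ∀ z ∈ ({a, b} : Set D),
          g x y z = x) ∧ MinorityOn h {a, b})) :
    Cons3 (fun x y z => h (g x y z) (g y z x) (g z x y)) ∧
    (∀ a b : D, a ≠ b →
      MajorityOn (fun x y z => h (g x y z) (g y z x) (g z x y)) {a, b} ∨
      MinorityOn (fun x y z => h (g x y z) (g y z x) (g z x y)) {a, b}) ∧
    (∀ Γ : Lang D, IsPoly3 Γ g → IsPoly3 Γ h →
      IsPoly3 Γ (fun x y z => h (g x y z) (g y z x) (g z x y))) := by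
  refine ⟨?_, ?_, ?_⟩
  · intro x y z
    have h1 := hgc x y z
    have h2 := hgc y z x
    have h3 := hgc z x y
    have h4 := hhc (g x y z) (g y z x) (g z x y)
    simp only [Set.mem_insert_iff, Set.mem_singleton_iff] at *
    rcases h4 with h4 | h4 | h4 <;> rw [h4] <;> tauto
  · intro a b hab
    have gcons : ∀ x ∈ ({a,b} : Set D), ∀ y ∈ ({a,b} : Set D), ∀ z ∈ ({a,b} : Set D),
        g x y z ∈ ({a,b} : Set D) := by
      intro x hx y hy z hz
      have hm := hgc x y z
      simp only [Set.mem_insert_iff, Set.mem_singleton_iff] at hm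
      rcases hm with h | h | h <;> rw [h]
      exacts [hx, hy, hz]
    rcases hB a b hab with ⟨hmaj, hproj⟩ | ⟨hproj, hmin⟩
    · left
      intro x hx y hy
      obtain ⟨e1, e2, e3⟩ := hmaj x hx y hy
      refine ⟨?_, ?_, ?_⟩ <;> simp only [e1, e2, e3] <;>
        rw [hproj x hx x hx x hx]
    · right
      intro x hx y hy
      obtain ⟨e1, e2, e3⟩ := hmin x hx y hy
      refine ⟨?_, ?_, ?_⟩ <;> simp only
      · rw [hproj x hx x hx y hy, hproj x hx y hy x hx, hproj y hy x hx x hx, e1]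
      · rw [hproj x hx y hy x hx, hproj y hy x hx x hx, hproj x hx x hx y hy, e2]
      · rw [hproj y hy x hx x hx, hproj x hx x hx y hy, hproj x hx y hy x hx, e3]
  · intro Γ hg hh R hR t1 t2 t3 h1 h2 h3
    exact hh R hR _ _ _ (hg R hR t1 t2 t3 h1 h2 h3) (hg R hR t2 t3 t1 h2 h3 h1)
      (hg R hR t3 t1 t2 h3 h1 h2)
end
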